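/- arXiv:2007.07015 — 2 statements merged into one kernel-verified Lean document; each statement's English description precedes it below -/
import Mathlib

section
/- Let σ ∈ ℝ with σ ≠ -1 and 0 < α ≤ 1, and let a_n^{(-α)} = Γ(n+α)/(Γ(α)Γ(n+1)). Then there exists C > 0 such that for all n ≥ 1, Σ_{j=1}^{n} a_{n-j}^{(-α)} j^σ ≤ C n^{max{α-1, σ+α}}. If σ = -1, the bound is C n^{α-1} ln(n) for n ≥ 2. -/
/-- Taylor coefficients of `(1-z)^{-α}`: `a_n^{(-α)} = Γ(n+α)/(Γ(α)Γ(n+1))`. -/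
noncomputable def aNeg (α : ℝ) (n : ℕ) : ℝ :=
  Real.Gamma (n + α) / (Real.Gamma α * (n.factorial : ℝ))


open Finset in
lemma aNeg_pos {α : ℝ} (hα : 0 < α) (n : ℕ) : 0 < aNeg α n := by
  apply div_pos (Real.Gamma_pos_of_pos (by positivity))
    (mul_pos (Real.Gamma_pos_of_pos hα) (by positivity))

lemma Gamma_add_le {x α : ℝ} (hx : 0 < x) (h0 : 0 ≤ α) (h1 : α ≤ 1) :
    Real.Gamma (x + α) ≤ Real.Gamma x * x ^ α := by
  have hx1 : (0:ℝ) < x + 1 := by linarith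
  have h := Real.convexOn_log_Gamma.2 (Set.mem_Ioi.mpr hx) (Set.mem_Ioi.mpr hx1)
    (by linarith : (0:ℝ) ≤ 1 - α) h0 (by ring)
  simp only [smul_eq_mul, Function.comp_apply] at h
  have hc : (1 - α) * x + α * (x + 1) = x + α := by ring
  rw [hc] at h
  have hΓx : 0 < Real.Gamma x := Real.Gamma_pos_of_pos hx
  have hΓx1 : Real.Gamma (x + 1) = x * Real.Gamma x := Real.Gamma_add_one hx.ne'
  have hrhs : (1 - α) * Real.log (Real.Gamma x) + α * Real.log (Real.Gamma (x + 1))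
      = Real.log (Real.Gamma x * x ^ α) := by
    rw [hΓx1, Real.log_mul hx.ne' hΓx.ne', Real.log_mul hΓx.ne' (by positivity),
      Real.log_rpow hx]
    ring
  rw [hrhs] at h
  have hpos : 0 < Real.Gamma (x + α) := Real.Gamma_pos_of_pos (by linarith)
  exact (Real.log_le_log_iff hpos (by positivity)).mp h

lemma aNeg_le {α : ℝ} (hα : 0 < α) (hα1 : α ≤ 1) {k : ℕ} (hk : 1 ≤ k) :
    aNeg α k ≤ (k : ℝ) ^ (α - 1) / Real.Gamma α := by
  obtain ⟨m, rfl⟩ := Nat.exists_eq_add_of_le hk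
  have hΓα : 0 < Real.Gamma α := Real.Gamma_pos_of_pos hα
  have hm1 : (0:ℝ) < (m:ℝ) + 1 := by positivity
  have hG : Real.Gamma ((((1 + m : ℕ)):ℝ) + α) ≤ (m.factorial : ℝ) * ((m:ℝ)+1) ^ α := by
    have := Gamma_add_le hm1 hα.le hα1
    rw [Real.Gamma_nat_eq_factorial] at this
    push_cast
    calc Real.Gamma (1 + (m:ℝ) + α) = Real.Gamma (((m:ℝ)+1) + α) := by ring_nf
      _ ≤ (m.factorial : ℝ) * ((m:ℝ)+1) ^ α := this
  have hfac : ((1+m).factorial : ℝ) = ((m:ℝ)+1) * (m.factorial : ℝ) := by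
    rw [Nat.add_comm 1 m, Nat.factorial_succ]; push_cast; ring
  rw [aNeg, div_le_div_iff₀ (by positivity) hΓα]
  have hcast : (((1+m:ℕ)):ℝ) = (m:ℝ) + 1 := by push_cast; ring
  rw [hcast, hfac]
  calc Real.Gamma ((m:ℝ) + 1 + α) * Real.Gamma α
      ≤ ((m.factorial : ℝ) * ((m:ℝ)+1) ^ α) * Real.Gamma α := by
        apply mul_le_mul_of_nonneg_right _ hΓα.le
        have := hG; rw [hcast] at this; exact this
    _ = ((m:ℝ)+1) ^ (α-1) * (Real.Gamma α * (((m:ℝ)+1) * (m.factorial:ℝ))) := by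
        rw [Real.rpow_sub hm1, Real.rpow_one]
        field_simp

lemma sum_aNeg {α : ℝ} (hα : 0 < α) (m : ℕ) :
    ∑ k ∈ Finset.range (m+1), aNeg α k
      = Real.Gamma ((m:ℝ) + 1 + α) / (Real.Gamma (α+1) * (m.factorial : ℝ)) := by
  have hΓα : Real.Gamma α ≠ 0 := (Real.Gamma_pos_of_pos hα).ne'
  have hΓα1 : Real.Gamma (α+1) = α * Real.Gamma α := by
    exact Real.Gamma_add_one hα.ne'
  induction m with
  | zero =>
      simp only [Finset.range_one, Finset.sum_singleton, aNeg, Nat.factorial_zero,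
        Nat.cast_zero, Nat.cast_one, zero_add, mul_one]
      rw [show (1:ℝ) + α = α + 1 by ring, hΓα1, div_self hΓα,
        div_self (mul_ne_zero hα.ne' hΓα)]
  | succ m ih =>
      rw [Finset.sum_range_succ, ih]
      have hrec : Real.Gamma ((m:ℝ) + 1 + 1 + α) = ((m:ℝ) + 1 + α) * Real.Gamma ((m:ℝ) + 1 + α) := by
        have : (m:ℝ) + 1 + 1 + α = ((m:ℝ) + 1 + α) + 1 := by ring
        rw [this, Real.Gamma_add_one (by positivity)]
      have hfac : ((m+1).factorial : ℝ) = ((m:ℝ)+1) * (m.factorial : ℝ) := by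
        rw [Nat.factorial_succ]; push_cast; ring
      have haN : aNeg α (m+1) = Real.Gamma ((m:ℝ) + 1 + α) / (Real.Gamma α * (((m:ℝ)+1) * (m.factorial:ℝ))) := by
        rw [aNeg, hfac]; push_cast; ring_nf
      rw [haN]
      push_cast
      rw [hrec, hfac, hΓα1]
      have hm : ((m:ℝ) + 1) ≠ 0 := by positivity
      have hf : (m.factorial : ℝ) ≠ 0 := by positivity
      field_simp

lemma sum_aNeg_le {α : ℝ} (hα : 0 < α) (hα1 : α ≤ 1) {n : ℕ} (hn : 1 ≤ n) :
    ∑ k ∈ Finset.range n, aNeg α k ≤ (n:ℝ) ^ α / Real.Gamma (α+1) := by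
  obtain ⟨m, rfl⟩ := Nat.exists_eq_add_of_le hn
  rw [Nat.add_comm 1 m, sum_aNeg hα]
  have hΓ1 : 0 < Real.Gamma (α+1) := Real.Gamma_pos_of_pos (by linarith)
  have hG : Real.Gamma ((m:ℝ) + 1 + α) ≤ (m.factorial : ℝ) * ((m:ℝ)+1) ^ α := by
    have := Gamma_add_le (show (0:ℝ) < (m:ℝ)+1 by positivity) hα.le hα1
    rwa [Real.Gamma_nat_eq_factorial] at this
  rw [div_le_div_iff₀ (by positivity) hΓ1]
  push_cast
  calc Real.Gamma ((m:ℝ) + 1 + α) * Real.Gamma (α+1)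
      ≤ ((m.factorial : ℝ) * ((m:ℝ)+1) ^ α) * Real.Gamma (α+1) :=
        mul_le_mul_of_nonneg_right hG hΓ1.le
    _ = ((m:ℝ)+1) ^ α * (Real.Gamma (α+1) * (m.factorial:ℝ)) := by ring

lemma sum_rpow_le {σ : ℝ} (hσ : -1 < σ) {n : ℕ} (hn : 1 ≤ n) :
    ∑ j ∈ Finset.Icc 1 n, (j:ℝ) ^ σ ≤ (1 + (σ+1)⁻¹) * (n:ℝ) ^ (σ+1) := by
  have hn0 : (0:ℝ) < n := by exact_mod_cast hn
  have hp : 0 < σ + 1 := by linarith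
  rcases le_or_gt 0 σ with hσ0 | hσ0
  · calc ∑ j ∈ Finset.Icc 1 n, (j:ℝ) ^ σ ≤ ∑ _j ∈ Finset.Icc 1 n, (n:ℝ) ^ σ := by
          apply Finset.sum_le_sum
          intro j hj
          have := (Finset.mem_Icc.mp hj).2
          exact Real.rpow_le_rpow (by positivity) (by exact_mod_cast this) hσ0
      _ = (n:ℝ) * (n:ℝ)^σ := by
          rw [Finset.sum_const, Nat.card_Icc]; simp [nsmul_eq_mul]
      _ = (n:ℝ)^(σ+1) := by rw [Real.rpow_add_one hn0.ne']; ring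
      _ ≤ (1 + (σ+1)⁻¹) * (n:ℝ)^(σ+1) := by
          nlinarith [Real.rpow_nonneg hn0.le (σ+1), inv_pos.mpr hp]
  · -- -1 < σ < 0 : telescoping
    have key : ∀ j : ℕ, 1 ≤ j → (σ+1) * (j:ℝ)^σ ≤ (j:ℝ)^(σ+1) - ((j:ℝ)-1)^(σ+1) := by
      intro j hj
      have hj0 : (0:ℝ) < j := by exact_mod_cast hj
      have hj1 : (1:ℝ) ≤ j := by exact_mod_cast hj
      have hs : (-1:ℝ) ≤ -1/j := by
        rw [neg_div, neg_le_neg_iff, div_le_one hj0]; exact hj1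
      have hb := rpow_one_add_le_one_add_mul_self hs hp.le (by linarith : σ + 1 ≤ 1)
      -- (1 - 1/j)^(σ+1) ≤ 1 - (σ+1)/j
      have h1 : (1:ℝ) + -1/j = ((j:ℝ)-1)/j := by field_simp; ring
      rw [h1] at hb
      have hjp : (0:ℝ) ≤ ((j:ℝ)-1)/j := div_nonneg (by linarith) hj0.le
      have := mul_le_mul_of_nonneg_right hb (Real.rpow_nonneg hj0.le (σ+1))
      rw [← Real.mul_rpow hjp hj0.le, div_mul_cancel₀ _ hj0.ne'] at this
      -- this : (j-1)^(σ+1) ≤ (1 + (σ+1)*(-1/j)) * j^(σ+1)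
      have hr : (1 + (σ+1) * (-1/j)) * (j:ℝ)^(σ+1) = (j:ℝ)^(σ+1) - (σ+1) * (j:ℝ)^σ := by
        have : (j:ℝ)^(σ+1) / j = (j:ℝ)^σ := by
          rw [Real.rpow_add_one hj0.ne']; field_simp
        rw [← this]; field_simp; ring
      rw [hr] at this
      linarith
    have htel : ∑ j ∈ Finset.Icc 1 n, ((j:ℝ)^(σ+1) - ((j:ℝ)-1)^(σ+1)) = (n:ℝ)^(σ+1) := by
      have : Finset.Icc 1 n = Finset.Ico 1 (n+1) := by rw [Finset.Ico_add_one_right_eq_Icc]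
      rw [this, Finset.sum_Ico_eq_sum_range]
      simp only [Nat.add_sub_cancel]
      calc ∑ i ∈ Finset.range n, (((1+i:ℕ):ℝ)^(σ+1) - (((1+i:ℕ):ℝ)-1)^(σ+1))
          = ∑ i ∈ Finset.range n, ((((i+1:ℕ)):ℝ)^(σ+1) - ((i:ℕ):ℝ)^(σ+1)) := by
            apply Finset.sum_congr rfl; intro i _; push_cast; ring_nf
        _ = ((n:ℕ):ℝ)^(σ+1) - ((0:ℕ):ℝ)^(σ+1) :=
            Finset.sum_range_sub (fun k : ℕ => ((k:ℝ))^(σ+1)) n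
        _ = (n:ℝ)^(σ+1) := by simp [Real.zero_rpow hp.ne']
    have hsum : (σ+1) * ∑ j ∈ Finset.Icc 1 n, (j:ℝ)^σ ≤ (n:ℝ)^(σ+1) := by
      rw [Finset.mul_sum, ← htel]
      exact Finset.sum_le_sum fun j hj => key j (Finset.mem_Icc.mp hj).1
    have h2 : ∑ j ∈ Finset.Icc 1 n, (j:ℝ)^σ ≤ (σ+1)⁻¹ * (n:ℝ)^(σ+1) := by
      rw [mul_comm] at hsum
      rw [inv_mul_eq_div, le_div_iff₀ hp]
      exact hsum
    calc ∑ j ∈ Finset.Icc 1 n, (j:ℝ)^σ ≤ (σ+1)⁻¹ * (n:ℝ)^(σ+1) := h2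
      _ ≤ (1 + (σ+1)⁻¹) * (n:ℝ)^(σ+1) := by
          nlinarith [Real.rpow_nonneg hn0.le (σ+1)]

lemma sum_rpow_bdd {σ : ℝ} (hσ : σ < -1) :
    ∃ K > (0:ℝ), ∀ n : ℕ, ∑ j ∈ Finset.Icc 1 n, (j:ℝ) ^ σ ≤ K := by
  have hsum : Summable (fun j : ℕ => (j:ℝ) ^ σ) := Real.summable_nat_rpow.mpr hσ
  have hnn : ∀ j : ℕ, 0 ≤ (j:ℝ) ^ σ := fun j => Real.rpow_nonneg (Nat.cast_nonneg j) σ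
  refine ⟨(∑' j : ℕ, (j:ℝ) ^ σ) + 1, by have := tsum_nonneg (L := SummationFilter.unconditional ℕ) hnn; linarith, fun n => ?_⟩
  have := Summable.sum_le_tsum (Finset.Icc 1 n) (fun j _ => hnn j) hsum
  linarith

lemma sum_rpow_neg_one {n : ℕ} :
    ∑ j ∈ Finset.Icc 1 n, (j:ℝ) ^ (-1:ℝ) ≤ 1 + Real.log n := by
  have : ∑ j ∈ Finset.Icc 1 n, (j:ℝ) ^ (-1:ℝ) = ((harmonic n : ℚ) : ℝ) := by
    rw [harmonic_eq_sum_Icc]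
    push_cast
    apply Finset.sum_congr rfl
    intro j _
    rw [Real.rpow_neg_one]
  rw [this]
  exact_mod_cast harmonic_le_one_add_log n

lemma sum_shift (f : ℕ → ℝ) (n : ℕ) :
    ∑ j ∈ Finset.Icc 1 n, f (n - j) = ∑ k ∈ Finset.range n, f k := by
  rw [← Finset.Ico_add_one_right_eq_Icc, Finset.sum_Ico_eq_sum_range]
  calc ∑ i ∈ Finset.range n, f (n - (1 + i))
      = ∑ i ∈ Finset.range n, f (n - 1 - i) := by
        apply Finset.sum_congr rfl; intro i _; rw [Nat.sub_sub]
    _ = ∑ k ∈ Finset.range n, f k := Finset.sum_range_reflect f n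

lemma key_split {α σ : ℝ} (hα : 0 < α) (hα1 : α ≤ 1) {n : ℕ} (hn : 1 ≤ n) :
    ∑ j ∈ Finset.Icc 1 n, aNeg α (n - j) * (j:ℝ) ^ σ
      ≤ (2 ^ (1-α) / Real.Gamma α) * (n:ℝ) ^ (α-1) * (∑ j ∈ Finset.Icc 1 n, (j:ℝ) ^ σ)
        + (max 1 (2 ^ (-σ)) / Real.Gamma (α+1)) * (n:ℝ) ^ (σ+α) := by
  have hn0 : (0:ℝ) < n := by exact_mod_cast hn
  have hΓα : 0 < Real.Gamma α := Real.Gamma_pos_of_pos hα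
  have hΓα1 : 0 < Real.Gamma (α+1) := Real.Gamma_pos_of_pos (by linarith)
  have hmax : (0:ℝ) < max 1 (2 ^ (-σ)) := lt_max_of_lt_left one_pos
  rw [← Finset.sum_filter_add_sum_filter_not (Finset.Icc 1 n) (fun j => 2*j ≤ n)]
  have hA : ∑ j ∈ (Finset.Icc 1 n).filter (fun j => 2*j ≤ n), aNeg α (n-j) * (j:ℝ)^σ
      ≤ (2^(1-α)/Real.Gamma α) * (n:ℝ)^(α-1) * (∑ j ∈ Finset.Icc 1 n, (j:ℝ)^σ) := by
    have hstep : ∀ j ∈ (Finset.Icc 1 n).filter (fun j => 2*j ≤ n),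
        aNeg α (n-j) * (j:ℝ)^σ ≤ ((2^(1-α)/Real.Gamma α) * (n:ℝ)^(α-1)) * (j:ℝ)^σ := by
      intro j hj
      obtain ⟨hj', h2j⟩ := Finset.mem_filter.mp hj
      obtain ⟨hj1, hjn⟩ := Finset.mem_Icc.mp hj'
      have hnj1 : 1 ≤ n - j := by omega
      apply mul_le_mul_of_nonneg_right _ (Real.rpow_nonneg (Nat.cast_nonneg j) σ)
      have hcast : ((n-j:ℕ):ℝ) = (n:ℝ) - (j:ℝ) := by
        rw [Nat.cast_sub hjn]
      have hhalf : (n:ℝ)/2 ≤ (n:ℝ) - j := by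
        have h2j' : (2:ℝ)*j ≤ n := by exact_mod_cast h2j
        linarith
      have h1 : ((n-j:ℕ):ℝ)^(α-1) ≤ ((n:ℝ)/2)^(α-1) := by
        rw [hcast]
        exact Real.rpow_le_rpow_of_nonpos (by positivity) hhalf (by linarith)
      have h2 : ((n:ℝ)/2)^(α-1) = (n:ℝ)^(α-1) * 2^(1-α) := by
        rw [Real.div_rpow hn0.le (by norm_num : (0:ℝ) ≤ 2), div_eq_mul_inv,
          ← Real.rpow_neg (by norm_num : (0:ℝ) ≤ 2), neg_sub]
      calc aNeg α (n-j) ≤ ((n-j:ℕ):ℝ)^(α-1) / Real.Gamma α := aNeg_le hα hα1 hnj1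
        _ ≤ ((n:ℝ)/2)^(α-1) / Real.Gamma α := by gcongr
        _ = (2^(1-α)/Real.Gamma α) * (n:ℝ)^(α-1) := by rw [h2]; ring
    calc ∑ j ∈ (Finset.Icc 1 n).filter (fun j => 2*j ≤ n), aNeg α (n-j) * (j:ℝ)^σ
        ≤ ∑ j ∈ (Finset.Icc 1 n).filter (fun j => 2*j ≤ n),
            ((2^(1-α)/Real.Gamma α) * (n:ℝ)^(α-1)) * (j:ℝ)^σ := Finset.sum_le_sum hstep
      _ = ((2^(1-α)/Real.Gamma α) * (n:ℝ)^(α-1)) *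
            ∑ j ∈ (Finset.Icc 1 n).filter (fun j => 2*j ≤ n), (j:ℝ)^σ := by
          rw [Finset.mul_sum]
      _ ≤ (2^(1-α)/Real.Gamma α) * (n:ℝ)^(α-1) * (∑ j ∈ Finset.Icc 1 n, (j:ℝ)^σ) := by
          apply mul_le_mul_of_nonneg_left _ (by positivity)
          exact Finset.sum_le_sum_of_subset_of_nonneg (Finset.filter_subset _ _)
            (fun j _ _ => Real.rpow_nonneg (Nat.cast_nonneg j) σ)
  have hB : ∑ j ∈ (Finset.Icc 1 n).filter (fun j => ¬ 2*j ≤ n), aNeg α (n-j) * (j:ℝ)^σ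
      ≤ (max 1 (2^(-σ)) / Real.Gamma (α+1)) * (n:ℝ)^(σ+α) := by
    have hstep : ∀ j ∈ (Finset.Icc 1 n).filter (fun j => ¬ 2*j ≤ n),
        aNeg α (n-j) * (j:ℝ)^σ ≤ aNeg α (n-j) * ((max 1 (2^(-σ))) * (n:ℝ)^σ) := by
      intro j hj
      obtain ⟨hj', h2j⟩ := Finset.mem_filter.mp hj
      obtain ⟨hj1, hjn⟩ := Finset.mem_Icc.mp hj'
      push_neg at h2j
      apply mul_le_mul_of_nonneg_left _ (aNeg_pos hα _).le
      have hjr : (n:ℝ)/2 ≤ j := by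
        have : (n:ℝ) < 2*j := by exact_mod_cast h2j
        linarith
      have hj0 : (0:ℝ) < j := by exact_mod_cast hj1
      rcases le_or_gt 0 σ with h | h
      · calc (j:ℝ)^σ ≤ (n:ℝ)^σ :=
              Real.rpow_le_rpow (Nat.cast_nonneg j) (by exact_mod_cast hjn) h
          _ ≤ max 1 (2^(-σ)) * (n:ℝ)^σ :=
              le_mul_of_one_le_left (Real.rpow_nonneg hn0.le σ) (le_max_left _ _)
      · calc (j:ℝ)^σ ≤ ((n:ℝ)/2)^σ :=
              Real.rpow_le_rpow_of_nonpos (by positivity) hjr h.le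
          _ = 2^(-σ) * (n:ℝ)^σ := by
              rw [Real.div_rpow hn0.le (by norm_num : (0:ℝ) ≤ 2), div_eq_mul_inv,
                ← Real.rpow_neg (by norm_num : (0:ℝ) ≤ 2)]
              ring
          _ ≤ max 1 (2^(-σ)) * (n:ℝ)^σ :=
              mul_le_mul_of_nonneg_right (le_max_right _ _) (Real.rpow_nonneg hn0.le σ)
    calc ∑ j ∈ (Finset.Icc 1 n).filter (fun j => ¬ 2*j ≤ n), aNeg α (n-j) * (j:ℝ)^σ
        ≤ ∑ j ∈ (Finset.Icc 1 n).filter (fun j => ¬ 2*j ≤ n),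
            aNeg α (n-j) * ((max 1 (2^(-σ))) * (n:ℝ)^σ) := Finset.sum_le_sum hstep
      _ = ((max 1 (2^(-σ))) * (n:ℝ)^σ) *
            ∑ j ∈ (Finset.Icc 1 n).filter (fun j => ¬ 2*j ≤ n), aNeg α (n-j) := by
          rw [← Finset.sum_mul]; ring
      _ ≤ ((max 1 (2^(-σ))) * (n:ℝ)^σ) * ∑ j ∈ Finset.Icc 1 n, aNeg α (n-j) := by
          apply mul_le_mul_of_nonneg_left _ (by positivity)
          exact Finset.sum_le_sum_of_subset_of_nonneg (Finset.filter_subset _ _)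
            (fun j _ _ => (aNeg_pos hα _).le)
      _ = ((max 1 (2^(-σ))) * (n:ℝ)^σ) * ∑ k ∈ Finset.range n, aNeg α k := by
          rw [sum_shift]
      _ ≤ ((max 1 (2^(-σ))) * (n:ℝ)^σ) * ((n:ℝ)^α / Real.Gamma (α+1)) := by
          apply mul_le_mul_of_nonneg_left (sum_aNeg_le hα hα1 hn) (by positivity)
      _ = (max 1 (2^(-σ)) / Real.Gamma (α+1)) * (n:ℝ)^(σ+α) := by
          rw [Real.rpow_add hn0]
          field_simp
  exact add_le_add hA hB

theorem stmt4 (α σ : ℝ) (hα : 0 < α) (hα1 : α ≤ 1) :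
    (σ ≠ -1 →
      ∃ C > (0 : ℝ), ∀ n : ℕ, 1 ≤ n →
        ∑ j ∈ Finset.Icc 1 n, aNeg α (n - j) * (j : ℝ) ^ σ
          ≤ C * (n : ℝ) ^ (max (α - 1) (σ + α))) ∧
    (σ = -1 →
      ∃ C > (0 : ℝ), ∀ n : ℕ, 2 ≤ n →
        ∑ j ∈ Finset.Icc 1 n, aNeg α (n - j) * (j : ℝ) ^ σ
          ≤ C * (n : ℝ) ^ (α - 1) * Real.log n) := by
  have hΓα : 0 < Real.Gamma α := Real.Gamma_pos_of_pos hα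
  have hΓα1 : 0 < Real.Gamma (α+1) := Real.Gamma_pos_of_pos (by linarith)
  set cA : ℝ := 2 ^ (1-α) / Real.Gamma α with hcA
  set cB : ℝ := max 1 (2 ^ (-σ)) / Real.Gamma (α+1) with hcB
  have hcA0 : 0 < cA := div_pos (Real.rpow_pos_of_pos two_pos _) hΓα
  have hcB0 : 0 < cB := div_pos (lt_max_of_lt_left one_pos) hΓα1
  constructor
  · intro hσne
    rcases lt_or_gt_of_ne hσne with hlt | hgt
    · obtain ⟨K, hK0, hK⟩ := sum_rpow_bdd hlt
      refine ⟨cA * K + cB, by positivity, fun n hn => ?_⟩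
      have hn0 : (0:ℝ) < n := by exact_mod_cast hn
      have hn1 : (1:ℝ) ≤ n := by exact_mod_cast hn
      have h1 : (n:ℝ)^(α-1) ≤ (n:ℝ)^(max (α-1) (σ+α)) :=
        Real.rpow_le_rpow_of_exponent_le hn1 (le_max_left _ _)
      have h2 : (n:ℝ)^(σ+α) ≤ (n:ℝ)^(max (α-1) (σ+α)) :=
        Real.rpow_le_rpow_of_exponent_le hn1 (le_max_right _ _)
      calc ∑ j ∈ Finset.Icc 1 n, aNeg α (n - j) * (j : ℝ) ^ σ
          ≤ cA * (n:ℝ)^(α-1) * (∑ j ∈ Finset.Icc 1 n, (j:ℝ)^σ) + cB * (n:ℝ)^(σ+α) :=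
            key_split hα hα1 hn
        _ ≤ cA * (n:ℝ)^(α-1) * K + cB * (n:ℝ)^(σ+α) := by
            apply add_le_add_left
            exact mul_le_mul_of_nonneg_left (hK n) (by positivity)
        _ ≤ cA * K * (n:ℝ)^(max (α-1) (σ+α)) + cB * (n:ℝ)^(max (α-1) (σ+α)) := by
            apply add_le_add
            · calc cA * (n:ℝ)^(α-1) * K = (cA * K) * (n:ℝ)^(α-1) := by ring
                _ ≤ (cA * K) * (n:ℝ)^(max (α-1) (σ+α)) :=
                    mul_le_mul_of_nonneg_left h1 (by positivity)
            · exact mul_le_mul_of_nonneg_left h2 hcB0.le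
        _ = (cA * K + cB) * (n:ℝ)^(max (α-1) (σ+α)) := by ring
    · have hp : (0:ℝ) < σ + 1 := by linarith
      have hinv : (0:ℝ) < 1 + (σ+1)⁻¹ := by positivity
      refine ⟨cA * (1 + (σ+1)⁻¹) + cB, by positivity, fun n hn => ?_⟩
      have hn0 : (0:ℝ) < n := by exact_mod_cast hn
      have hn1 : (1:ℝ) ≤ n := by exact_mod_cast hn
      have hexp : (n:ℝ)^(α-1) * (n:ℝ)^(σ+1) = (n:ℝ)^(σ+α) := by
        rw [← Real.rpow_add hn0]; ring_nf
      have h2 : (n:ℝ)^(σ+α) ≤ (n:ℝ)^(max (α-1) (σ+α)) :=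
        Real.rpow_le_rpow_of_exponent_le hn1 (le_max_right _ _)
      calc ∑ j ∈ Finset.Icc 1 n, aNeg α (n - j) * (j : ℝ) ^ σ
          ≤ cA * (n:ℝ)^(α-1) * (∑ j ∈ Finset.Icc 1 n, (j:ℝ)^σ) + cB * (n:ℝ)^(σ+α) :=
            key_split hα hα1 hn
        _ ≤ cA * (n:ℝ)^(α-1) * ((1 + (σ+1)⁻¹) * (n:ℝ)^(σ+1)) + cB * (n:ℝ)^(σ+α) := by
            apply add_le_add_left
            exact mul_le_mul_of_nonneg_left (sum_rpow_le hgt hn) (by positivity)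
        _ = (cA * (1 + (σ+1)⁻¹)) * (n:ℝ)^(σ+α) + cB * (n:ℝ)^(σ+α) := by
            rw [← hexp]; ring
        _ ≤ (cA * (1 + (σ+1)⁻¹)) * (n:ℝ)^(max (α-1) (σ+α))
              + cB * (n:ℝ)^(max (α-1) (σ+α)) := by
            apply add_le_add
            · exact mul_le_mul_of_nonneg_left h2 (by positivity)
            · exact mul_le_mul_of_nonneg_left h2 hcB0.le
        _ = (cA * (1 + (σ+1)⁻¹) + cB) * (n:ℝ)^(max (α-1) (σ+α)) := by ring
  · intro hσeq
    subst hσeq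
    have hlog2 : (0:ℝ) < Real.log 2 := Real.log_pos one_lt_two
    refine ⟨cA * (1 + (Real.log 2)⁻¹) + cB / Real.log 2, by positivity, fun n hn => ?_⟩
    have hn1 : 1 ≤ n := le_trans one_le_two hn
    have hn0 : (0:ℝ) < n := by exact_mod_cast hn1
    have hn2 : (2:ℝ) ≤ n := by exact_mod_cast hn
    have hlogn : Real.log 2 ≤ Real.log n := Real.log_le_log two_pos hn2
    have hlogn0 : (0:ℝ) < Real.log n := lt_of_lt_of_le hlog2 hlogn
    have hexp2 : (n:ℝ)^((-1:ℝ)+α) = (n:ℝ)^(α-1) := by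
      congr 1; ring
    have hone : (1:ℝ) + Real.log n ≤ (1 + (Real.log 2)⁻¹) * Real.log n := by
      have : (1:ℝ) ≤ (Real.log 2)⁻¹ * Real.log n := by
        rw [inv_mul_eq_div, le_div_iff₀ hlog2]
        linarith
      nlinarith
    calc ∑ j ∈ Finset.Icc 1 n, aNeg α (n - j) * (j : ℝ) ^ (-1:ℝ)
        ≤ cA * (n:ℝ)^(α-1) * (∑ j ∈ Finset.Icc 1 n, (j:ℝ)^(-1:ℝ)) + cB * (n:ℝ)^((-1:ℝ)+α) :=
          key_split hα hα1 hn1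
      _ ≤ cA * (n:ℝ)^(α-1) * (1 + Real.log n) + cB * (n:ℝ)^(α-1) := by
          rw [hexp2]
          apply add_le_add_left
          exact mul_le_mul_of_nonneg_left sum_rpow_neg_one (by positivity)
      _ ≤ cA * (n:ℝ)^(α-1) * ((1 + (Real.log 2)⁻¹) * Real.log n)
            + (cB / Real.log 2) * (n:ℝ)^(α-1) * Real.log n := by
          apply add_le_add
          · exact mul_le_mul_of_nonneg_left hone (by positivity)
          · calc cB * (n:ℝ)^(α-1) = (cB / Real.log 2) * (n:ℝ)^(α-1) * Real.log 2 := by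
                  field_simp
              _ ≤ (cB / Real.log 2) * (n:ℝ)^(α-1) * Real.log n := by
                  exact mul_le_mul_of_nonneg_left hlogn (by positivity)
      _ = (cA * (1 + (Real.log 2)⁻¹) + cB / Real.log 2) * (n:ℝ)^(α-1) * Real.log n := by
          ring
end

section
/- For 0 ≤ θ ≤ 1/2 and 0 < α ≤ 1, the function f₁(θ) = θ/(1+θα) + (1-2θ)/(3-2θ) attains its maximum over [0,1/2] at θ = 1/(2+2α), with maximum value (1+α)/(2+3α). -/
theorem stmt15 (α : ℝ) (hα : 0 < α) (hα1 : α ≤ 1) :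
    (∀ θ : ℝ, 0 ≤ θ → θ ≤ 1 / 2 →
      θ / (1 + θ * α) + (1 - 2 * θ) / (3 - 2 * θ) ≤ (1 + α) / (2 + 3 * α)) ∧
    (let θ := 1 / (2 + 2 * α);
      θ / (1 + θ * α) + (1 - 2 * θ) / (3 - 2 * θ) = (1 + α) / (2 + 3 * α)) := by
  constructor
  · intro θ h0 h1
    have hd1 : 0 < 1 + θ * α := by nlinarith
    have hd2 : (0:ℝ) < 3 - 2 * θ := by linarith
    have hd3 : (0:ℝ) < 2 + 3 * α := by linarith
    rw [div_add_div _ _ (ne_of_gt hd1) (ne_of_gt hd2),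
      div_le_div_iff₀ (by positivity) hd3]
    nlinarith [sq_nonneg (1 - (2 + 2 * α) * θ), mul_pos hα hd2,
      mul_nonneg (sq_nonneg (1 - (2 + 2 * α) * θ)) hα.le,
      mul_nonneg (mul_nonneg (sq_nonneg (1 - (2 + 2 * α) * θ)) hα.le) h0]
  · intro θ
    have h1 : (2 + 2 * α) ≠ 0 := by positivity
    have h3 : (2 + 3 * α) ≠ 0 := by positivity
    have hlt : (1:ℝ) / (2 + 2 * α) < 1 := by
      rw [div_lt_one (by positivity)]; linarith
    have hA : 1 + (1 / (2 + 2 * α)) * α ≠ 0 := by positivity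
    have hB : 3 - 2 * (1 / (2 + 2 * α)) ≠ 0 := by nlinarith
    show (1 / (2 + 2 * α)) / (1 + (1 / (2 + 2 * α)) * α) +
      (1 - 2 * (1 / (2 + 2 * α))) / (3 - 2 * (1 / (2 + 2 * α))) = (1 + α) / (2 + 3 * α)
    have h4 : (4:ℝ) + α * 6 ≠ 0 := by positivity
    field_simp
    have h5 : 3 * (2 + 2 * α) - 2 ≠ 0 := by nlinarith
    field_simp [show (1 + α) * 3 - 1 ≠ 0 by nlinarith]
    ring
end
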